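/- Let s > 0 be a sensitivity bound, σ > 0 a noise multiplier, and α > 1. For any real numbers m₁, m₂ with |m₁ − m₂| ≤ s, the Rényi divergence of order α between the Gaussian measures N(m₁, s²σ²) and N(m₂, s²σ²) is at most α/(2σ²). -/

import Mathlib

open MeasureTheory Real ProbabilityTheory

/-- The Rényi divergence of order `α` between two measures:
`D_α(μ‖ν) = (1/(α−1)) · log ∫ (dμ/dν)^α dν`. -/
noncomputable def renyiDiv {X : Type*} [MeasurableSpace X] (α : ℝ) (μ ν : Measure X) : ℝ :=
  (α - 1)⁻¹ * Real.log (∫ x, (μ.rnDeriv ν x).toReal ^ α ∂ν)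

/-!
Two Gaussians of equal variance `v` have densities, so `dN(m₁,v)/dN(m₂,v)` is the ratio of their
densities. Completing the square, `p₂ · (p₁/p₂)^α = exp (α(α-1)(m₁-m₂)²/(2v)) · p_m` with `p_m` the
Gaussian density of mean `m = αm₁ + (1-α)m₂`, so `D_α(N(m₁,v)‖N(m₂,v)) = α(m₁-m₂)²/(2v)` exactly.
For `v = s²σ²` and `|m₁ - m₂| ≤ s` this is at most `α/(2σ²)`.
-/

section GaussianRenyi

variable (m₁ m₂ : ℝ) {v : NNReal}

lemma rnDeriv_gaussianReal_gaussianReal (hv : v ≠ 0) :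
    (gaussianReal m₁ v).rnDeriv (gaussianReal m₂ v) =ᵐ[gaussianReal m₂ v]
      fun x ↦ ENNReal.ofReal (gaussianPDFReal m₁ v x / gaussianPDFReal m₂ v x) := by
  have h_meas : Measurable fun x ↦
      ENNReal.ofReal (gaussianPDFReal m₁ v x / gaussianPDFReal m₂ v x) := by
    fun_prop
  have h_withDensity : gaussianReal m₁ v = (gaussianReal m₂ v).withDensity
      fun x ↦ ENNReal.ofReal (gaussianPDFReal m₁ v x / gaussianPDFReal m₂ v x) := by
    rw [gaussianReal_of_var_ne_zero _ hv, gaussianReal_of_var_ne_zero _ hv,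
      ← withDensity_mul _ (measurable_gaussianPDF m₂ v) h_meas]
    congr 1
    ext x
    rw [Pi.mul_apply, gaussianPDF, gaussianPDF, ← ENNReal.ofReal_mul (gaussianPDFReal_nonneg _ _ _),
      mul_div_cancel₀ _ (gaussianPDFReal_pos m₂ v x hv).ne']
  rw [h_withDensity]
  exact Measure.rnDeriv_withDensity _ h_meas

lemma gaussianPDFReal_mul_rpow_div (hv : v ≠ 0) (α x : ℝ) :
    gaussianPDFReal m₂ v x * (gaussianPDFReal m₁ v x / gaussianPDFReal m₂ v x) ^ α
      = rexp (α * (α - 1) * (m₁ - m₂) ^ 2 / (2 * v))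
        * gaussianPDFReal (α * m₁ + (1 - α) * m₂) v x := by
  have hv' : (v : ℝ) ≠ 0 := by exact_mod_cast hv
  simp only [gaussianPDFReal]
  rw [mul_div_mul_left _ _ (by positivity), ← exp_sub, ← exp_mul, mul_assoc, ← exp_add,
    mul_left_comm, ← exp_add]
  congr 2
  field_simp
  ring

lemma integral_rpow_gaussianPDFReal_div (hv : v ≠ 0) (α : ℝ) :
    ∫ x, (gaussianPDFReal m₁ v x / gaussianPDFReal m₂ v x) ^ α ∂gaussianReal m₂ v
      = rexp (α * (α - 1) * (m₁ - m₂) ^ 2 / (2 * v)) := by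
  simp only [integral_gaussianReal_eq_integral_smul hv, smul_eq_mul,
    gaussianPDFReal_mul_rpow_div m₁ m₂ hv]
  rw [integral_const_mul, integral_gaussianPDFReal_eq_one _ hv, mul_one]

theorem renyiDiv_gaussianReal (hv : v ≠ 0) {α : ℝ} (hα : α ≠ 1) :
    renyiDiv α (gaussianReal m₁ v) (gaussianReal m₂ v) = α * (m₁ - m₂) ^ 2 / (2 * v) := by
  have h_integrand : ∫ x, ((gaussianReal m₁ v).rnDeriv (gaussianReal m₂ v) x).toReal ^ α
        ∂gaussianReal m₂ v
      = ∫ x, (gaussianPDFReal m₁ v x / gaussianPDFReal m₂ v x) ^ α ∂gaussianReal m₂ v := by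
    refine integral_congr_ae ((rnDeriv_gaussianReal_gaussianReal m₁ m₂ hv).mono fun x hx ↦ ?_)
    dsimp only at hx ⊢
    rw [hx, ENNReal.toReal_ofReal
      (div_nonneg (gaussianPDFReal_nonneg _ _ _) (gaussianPDFReal_nonneg _ _ _))]
  have hα' : α - 1 ≠ 0 := sub_ne_zero.mpr hα
  rw [renyiDiv, h_integrand, integral_rpow_gaussianPDFReal_div m₁ m₂ hv, log_exp]
  field_simp

end GaussianRenyi

/-- RDP of the Gaussian mechanism: with sensitivity bound `s > 0` and noise multiplier `σ > 0`,
if `|m₁ − m₂| ≤ s` then `D_α(N(m₁, s²σ²) ‖ N(m₂, s²σ²)) ≤ α/(2σ²)`. -/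
theorem renyiDiv_gaussian_mechanism (s σ : ℝ) (hs : 0 < s) (hσ : 0 < σ)
    (α : ℝ) (hα : 1 < α) (m₁ m₂ : ℝ) (hm : |m₁ - m₂| ≤ s) :
    renyiDiv α (gaussianReal m₁ (s ^ 2 * σ ^ 2).toNNReal)
        (gaussianReal m₂ (s ^ 2 * σ ^ 2).toNNReal) ≤ α / (2 * σ ^ 2) := by
  have hv : ((s ^ 2 * σ ^ 2).toNNReal : ℝ) = s ^ 2 * σ ^ 2 := Real.coe_toNNReal _ (by positivity)
  have hv0 : (s ^ 2 * σ ^ 2).toNNReal ≠ 0 := by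
    rw [← NNReal.coe_ne_zero, hv]
    positivity
  have h_sq : (m₁ - m₂) ^ 2 ≤ s ^ 2 := sq_le_sq' (abs_le.mp hm).1 (abs_le.mp hm).2
  rw [renyiDiv_gaussianReal m₁ m₂ hv0 hα.ne', hv]
  calc α * (m₁ - m₂) ^ 2 / (2 * (s ^ 2 * σ ^ 2))
      ≤ α * s ^ 2 / (2 * (s ^ 2 * σ ^ 2)) := by gcongr
    _ = α / (2 * σ ^ 2) := by field_simp
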